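/- If u is an inner function with u(0) = 0, then D_u maps conj(H^2_0) onto conj(H^2_0). -/

import Mathlib

open MeasureTheory Complex AddCircle

noncomputable section

namespace Paper

/-- The period `2π`. -/
abbrev T : ℝ := 2 * Real.pi

instance : Fact (0 < T) := ⟨by positivity⟩

/-- Normalized Lebesgue (Haar) measure on the circle. -/
abbrev μ : Measure (AddCircle T) := haarAddCircle

/-- The space `L²(𝕋, dm)`. -/
abbrev L2 : Type := Lp ℂ 2 μ

lemma memLp_mul {u : AddCircle T → ℂ} (hm : AEStronglyMeasurable u μ)
    (hb : ∀ᵐ x ∂μ, ‖u x‖ ≤ 1) (f : L2) :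
    MemLp (fun x => u x * (f : AddCircle T → ℂ) x) 2 μ := by
  refine (Lp.memLp f).of_le (hm.mul (Lp.aestronglyMeasurable f)) ?_
  filter_upwards [hb] with x hx
  calc ‖u x * (f : AddCircle T → ℂ) x‖ = ‖u x‖ * ‖(f : AddCircle T → ℂ) x‖ := norm_mul _ _
    _ ≤ 1 * ‖(f : AddCircle T → ℂ) x‖ := by gcongr
    _ = ‖(f : AddCircle T → ℂ) x‖ := one_mul _

/-- Multiplication by a measurable function bounded by `1`, as a bounded operator on `L²`. -/
def mulCLM (u : AddCircle T → ℂ) (hm : AEStronglyMeasurable u μ)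
    (hb : ∀ᵐ x ∂μ, ‖u x‖ ≤ 1) : L2 →L[ℂ] L2 :=
  LinearMap.mkContinuous
    { toFun := fun f => (memLp_mul hm hb f).toLp _
      map_add' := fun f g => by
        show MemLp.toLp _ (memLp_mul hm hb (f + g)) = _
        have h : (fun x => u x * ((f + g : L2) : AddCircle T → ℂ) x)
            =ᵐ[μ] (fun x => u x * (f : AddCircle T → ℂ) x)
              + (fun x => u x * (g : AddCircle T → ℂ) x) := by
          filter_upwards [Lp.coeFn_add f g] with x hx
          simp only [Pi.add_apply, hx, mul_add]
        rw [MemLp.toLp_congr (memLp_mul hm hb (f + g))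
          ((memLp_mul hm hb f).add (memLp_mul hm hb g)) h, MemLp.toLp_add]
      map_smul' := fun c f => by
        have h : (fun x => u x * ((c • f : L2) : AddCircle T → ℂ) x)
            =ᵐ[μ] c • (fun x => u x * (f : AddCircle T → ℂ) x) := by
          filter_upwards [Lp.coeFn_smul c f] with x hx
          simp only [Pi.smul_apply, hx, smul_eq_mul]
          ring
        simp only [RingHom.id_apply]
        rw [MemLp.toLp_congr (memLp_mul hm hb (c • f))
          ((memLp_mul hm hb f).const_smul c) h, MemLp.toLp_const_smul] }
    1
    (fun f => by
      simp only [LinearMap.coe_mk, AddHom.coe_mk, one_mul]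
      rw [Lp.norm_toLp]
      have h1 : eLpNorm (fun x => u x * (f : AddCircle T → ℂ) x) 2 μ
          ≤ eLpNorm (f : AddCircle T → ℂ) 2 μ := by
        refine eLpNorm_mono_ae ?_
        filter_upwards [hb] with x hx
        calc ‖u x * (f : AddCircle T → ℂ) x‖
            = ‖u x‖ * ‖(f : AddCircle T → ℂ) x‖ := norm_mul _ _
          _ ≤ 1 * ‖(f : AddCircle T → ℂ) x‖ := by gcongr
          _ = ‖(f : AddCircle T → ℂ) x‖ := one_mul _
      calc (eLpNorm (fun x => u x * (f : AddCircle T → ℂ) x) 2 μ).toReal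
          ≤ (eLpNorm (f : AddCircle T → ℂ) 2 μ).toReal :=
            ENNReal.toReal_mono (Lp.eLpNorm_ne_top f) h1
        _ = ‖f‖ := (Lp.norm_def f).symm)

lemma memLp_conj (f : L2) :
    MemLp (fun x => (starRingEnd ℂ) ((f : AddCircle T → ℂ) x)) 2 μ := by
  refine (Lp.memLp f).of_le ?_ ?_
  · exact Complex.continuous_conj.comp_aestronglyMeasurable (Lp.aestronglyMeasurable f)
  · filter_upwards with x
    simp

/-- Complex conjugation on `L²`. -/
def conjL2 (f : L2) : L2 := (memLp_conj f).toLp _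

/-- The independent variable `z = e^{iθ}` as a function on the circle. -/
def zfun : AddCircle T → ℂ := fun x => fourier 1 x

lemma zfun_meas : AEStronglyMeasurable zfun μ :=
  ((map_continuous (fourier (T := T) 1)).aestronglyMeasurable)

lemma zfun_norm : ∀ᵐ x ∂μ, ‖zfun x‖ ≤ 1 := by
  filter_upwards with x
  simp [zfun, Circle.norm_coe]

/-- Multiplication by `z` (the bilateral shift `M` on `L²`). -/
def Mz : L2 →L[ℂ] L2 := mulCLM zfun zfun_meas zfun_norm

/-- Multiplication by `conj z`. -/
def Mzbar : L2 →L[ℂ] L2 :=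
  mulCLM (fun x => (starRingEnd ℂ) (zfun x))
    (Complex.continuous_conj.comp_aestronglyMeasurable zfun_meas)
    (by filter_upwards with x; simp [zfun, Circle.norm_coe])

/-- The Hardy space `H² = {f ∈ L² : f̂(n) = 0 for all n < 0}`. -/
def H2 : Submodule ℂ L2 where
  carrier := {f | ∀ n : ℤ, n < 0 → fourierBasis.repr f n = 0}
  add_mem' := by
    intro f g hf hg n hn
    simp [map_add, hf n hn, hg n hn]
  zero_mem' := by intro n hn; simp
  smul_mem' := by
    intro c f hf n hn
    simp [_root_.map_smul, hf n hn]

lemma continuous_coeff (n : ℤ) :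
    Continuous fun f : L2 => fourierBasis.repr f n := by
  rw [Metric.continuous_iff]
  intro f ε hε
  refine ⟨ε, hε, fun g hg => ?_⟩
  have h1 : fourierBasis.repr g n - fourierBasis.repr f n = fourierBasis.repr (g - f) n := by
    simp [map_sub]
  have h2 : ‖fourierBasis.repr (g - f) n‖ ≤ ‖fourierBasis.repr (g - f)‖ :=
    lp.norm_apply_le_norm (by norm_num) _ n
  have h3 : ‖fourierBasis.repr (g - f)‖ = ‖g - f‖ :=
    fourierBasis.repr.norm_map _
  calc dist (fourierBasis.repr g n) (fourierBasis.repr f n)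
      = ‖fourierBasis.repr (g - f) n‖ := by rw [dist_eq_norm, h1]
    _ ≤ ‖g - f‖ := by rw [← h3]; exact h2
    _ = dist g f := (dist_eq_norm g f).symm
    _ < ε := hg

lemma H2_isClosed : IsClosed (H2 : Set L2) := by
  have : (H2 : Set L2) =
      ⋂ n ∈ {m : ℤ | m < 0}, {f : L2 | fourierBasis.repr f n = 0} := by
    ext f
    simp only [Set.mem_iInter, Set.mem_setOf_eq]
    rfl
  rw [this]
  exact isClosed_biInter fun n _ => isClosed_eq (continuous_coeff n) continuous_const

instance : CompleteSpace H2 := H2_isClosed.completeSpace_coe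

/-- The Riesz projection `P⁺` of `L²` onto `H²`. -/
def Pp : L2 →L[ℂ] L2 := H2.subtypeL ∘L Submodule.orthogonalProjectionOnto H2

/-- The projection `P⁻ = I − P⁺` of `L²` onto `conj(H²₀)`. -/
def Pm : L2 →L[ℂ] L2 := ContinuousLinearMap.id ℂ L2 - Pp

/-- `conj(H²₀) = {f ∈ L² : f̂(n) = 0 for all n ≥ 0}`, the orthogonal complement of `H²`. -/
def Hm : Submodule ℂ L2 where
  carrier := {f | ∀ n : ℤ, 0 ≤ n → fourierBasis.repr f n = 0}
  add_mem' := by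
    intro f g hf hg n hn
    simp [map_add, hf n hn, hg n hn]
  zero_mem' := by intro n hn; simp
  smul_mem' := by
    intro c f hf n hn
    simp [_root_.map_smul, hf n hn]

/-- The constant function `1` as an element of `L²`. -/
def oneL2 : L2 := (memLp_const (1 : ℂ)).toLp _

/-- An inner function: a bounded measurable unimodular function on the circle whose
negative Fourier coefficients vanish. -/
structure InnerData where
  u : AddCircle T → ℂ
  meas : AEStronglyMeasurable u μ
  unim : ∀ᵐ x ∂μ, ‖u x‖ = 1
  anal : ∀ n : ℤ, n < 0 → fourierCoeff u n = 0

namespace InnerData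

variable (U : InnerData)

lemma bd : ∀ᵐ x ∂μ, ‖U.u x‖ ≤ 1 := by
  filter_upwards [U.unim] with x hx
  rw [hx]

/-- Multiplication by `u`: the operator `M_u` on `L²`. -/
def M : L2 →L[ℂ] L2 := mulCLM U.u U.meas U.bd

/-- Multiplication by `conj u`: the operator `M_{conj u}` on `L²`. -/
def Mc : L2 →L[ℂ] L2 :=
  mulCLM (fun x => (starRingEnd ℂ) (U.u x))
    (Complex.continuous_conj.comp_aestronglyMeasurable U.meas)
    (by filter_upwards [U.bd] with x hx; simpa using hx)

/-- `u` as an element of `L²`. -/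
def toL2 : L2 :=
  (memLp_top_of_bound U.meas 1 U.bd |>.mono_exponent le_top).toLp _

/-- The value `u(0)` of (the analytic extension of) `u` at the origin, i.e. the mean of `u`. -/
def a0 : ℂ := fourierCoeff U.u 0

/-- The subspace `uH²`. -/
def uH2 : Submodule ℂ L2 := Submodule.map (U.M : L2 →ₗ[ℂ] L2) H2

/-- The model space `K_u = H² ∩ (uH²)ᗮ`. -/
def Ku : Submodule ℂ L2 := H2 ⊓ (U.uH2)ᗮ

lemma Ku_isClosed : IsClosed (U.Ku : Set L2) := by
  have : (U.Ku : Set L2) = (H2 : Set L2) ∩ ((U.uH2)ᗮ : Set L2) := rfl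
  rw [this]
  exact H2_isClosed.inter (U.uH2).isClosed_orthogonal

instance : CompleteSpace U.Ku := U.Ku_isClosed.completeSpace_coe

/-- `K_u^⊥`, the orthogonal complement of the model space in `L²`. -/
def KP : Submodule ℂ L2 := (U.Ku)ᗮ

instance : CompleteSpace U.KP := (U.Ku).isClosed_orthogonal.completeSpace_coe

/-- The orthogonal projection `P_u : L² → K_u` (viewed as an operator on `L²`). -/
def Pu : L2 →L[ℂ] L2 := (U.Ku).subtypeL ∘L Submodule.orthogonalProjectionOnto U.Ku

/-- The dual of the compressed shift: `D_u = (I − P_u) M_z |_{K_u^⊥}`. -/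
def Du : U.KP →L[ℂ] U.KP :=
  Submodule.orthogonalProjectionOnto U.KP ∘L Mz ∘L (U.KP).subtypeL

/-- The conjugation `C_u f = u · conj(z f)` on `L²`. -/
def C (f : L2) : L2 := U.M (conjL2 (Mz f))

/-- The reproducing kernel of `K_u` at `0`: `k₀ᵘ = 1 − conj(u(0))·u`. -/
def k0 : L2 := oneL2 - (starRingEnd ℂ) U.a0 • U.toL2

/-- The similarity `V_u = P⁻ + (conj u/conj u(0)) P⁺` of the paper. -/
def V : L2 →L[ℂ] L2 := Pm + ((starRingEnd ℂ) U.a0)⁻¹ • (U.Mc ∘L Pp)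

/-- The inverse similarity `V_u⁻¹ = P⁻ + conj(u(0)) u P⁺`. -/
def Vinv : L2 →L[ℂ] L2 := Pm + (starRingEnd ℂ) U.a0 • (U.M ∘L Pp)

end InnerData

lemma Mz_mem_H2 {f : L2} (hf : f ∈ H2) : Mz f ∈ H2 := by
  intro n hn
  rw [fourierBasis_repr]
  have hcoe : (Mz f : AddCircle T → ℂ) =ᵐ[μ] fun x => zfun x * (f : AddCircle T → ℂ) x :=
    MemLp.coeFn_toLp (memLp_mul zfun_meas zfun_norm f)
  have h1 : fourierCoeff (Mz f : AddCircle T → ℂ) n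
      = fourierCoeff (f : AddCircle T → ℂ) (n - 1) := by
    unfold fourierCoeff
    rw [integral_congr_ae (by filter_upwards [hcoe] with x hx; rw [hx])]
    refine integral_congr_ae ?_
    filter_upwards with x
    have : fourier (-n) x * zfun x = fourier (-(n - 1)) x := by
      unfold zfun
      rw [show (-(n - 1) : ℤ) = -n + 1 by ring, fourier_add]
    simp only [smul_eq_mul]
    calc fourier (-n) x * (zfun x * (f : AddCircle T → ℂ) x)
        = (fourier (-n) x * zfun x) * (f : AddCircle T → ℂ) x := by ring
      _ = fourier (-(n - 1)) x * (f : AddCircle T → ℂ) x := by rw [this]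
  rw [h1]
  have := hf (n - 1) (by omega)
  rwa [fourierBasis_repr] at this

/-- The unilateral shift `S` on `H²`. -/
def Shift : H2 →L[ℂ] H2 :=
  (Mz ∘L H2.subtypeL).codRestrict H2 (fun x => Mz_mem_H2 x.2)

/-! Multiplication by `z` shifts Fourier coefficients by one, so for `f ∈ conj(H²₀)` the function
`z f` lies in `conj(H²₀) + ℂ·1`. When `u(0) = 0` the constant `1` lies in `K_u`, so projecting
onto `K_u^⊥` removes exactly that component: `D_u f = z f - f̂(-1)`. Conversely every
`g ∈ conj(H²₀)` equals `D_u (z̄ g)`, with `z̄ g ∈ conj(H²₀)` again. -/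

open scoped InnerProductSpace

lemma _root_.HilbertBasis.inner_eq_zero_of_repr {ι 𝕜 E : Type*} [RCLike 𝕜]
    [NormedAddCommGroup E] [InnerProductSpace 𝕜 E] (b : HilbertBasis ι 𝕜 E) {f g : E}
    (h : ∀ i, b.repr f i = 0 ∨ b.repr g i = 0) : ⟪f, g⟫_𝕜 = 0 := by
  have hterm : ∀ i, ⟪b.repr f i, b.repr g i⟫_𝕜 = 0 := fun i => by
    rcases h i with h | h <;> simp [h]
  rw [← b.repr.inner_map_map, lp.inner_eq_tsum, tsum_congr hterm, tsum_zero]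

lemma fourierCoeff_fourier_mul {P : ℝ} [Fact (0 < P)] (f : AddCircle P → ℂ) (m n : ℤ) :
    fourierCoeff (fun x => fourier m x * f x) n = fourierCoeff f (n - m) := by
  simp only [fourierCoeff, smul_eq_mul, ← mul_assoc, ← fourier_add]
  congr 3 with x
  ring_nf

lemma coeFn_mulCLM (u : AddCircle T → ℂ) (hm : AEStronglyMeasurable u μ)
    (hb : ∀ᵐ x ∂μ, ‖u x‖ ≤ 1) (f : L2) :
    (mulCLM u hm hb f : AddCircle T → ℂ) =ᵐ[μ] fun x => u x * (f : AddCircle T → ℂ) x :=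
  MemLp.coeFn_toLp (memLp_mul hm hb f)

lemma coeFn_Mz (f : L2) :
    (Mz f : AddCircle T → ℂ) =ᵐ[μ] fun x => zfun x * (f : AddCircle T → ℂ) x :=
  coeFn_mulCLM _ _ _ f

lemma coeFn_Mzbar (f : L2) :
    (Mzbar f : AddCircle T → ℂ)
      =ᵐ[μ] fun x => (starRingEnd ℂ) (zfun x) * (f : AddCircle T → ℂ) x :=
  coeFn_mulCLM _ _ _ f

lemma coeFn_conjL2 (f : L2) :
    (conjL2 f : AddCircle T → ℂ) =ᵐ[μ] fun x => (starRingEnd ℂ) ((f : AddCircle T → ℂ) x) :=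
  MemLp.coeFn_toLp (memLp_conj f)

lemma coeFn_oneL2 : (oneL2 : AddCircle T → ℂ) =ᵐ[μ] fun _ => 1 :=
  MemLp.coeFn_toLp _

lemma repr_Mz (f : L2) (n : ℤ) :
    fourierBasis.repr (Mz f) n = fourierBasis.repr f (n - 1) := by
  rw [fourierBasis_repr, fourierBasis_repr, fourierCoeff_congr_ae (coeFn_Mz f),
    ← fourierCoeff_fourier_mul]
  rfl

lemma repr_Mzbar (f : L2) (n : ℤ) :
    fourierBasis.repr (Mzbar f) n = fourierBasis.repr f (n + 1) := by
  have hconj : (fun x => (starRingEnd ℂ) (zfun x) * (f : AddCircle T → ℂ) x)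
      = fun x => fourier (-1) x * (f : AddCircle T → ℂ) x := by
    simp only [zfun, fourier_neg]
  rw [fourierBasis_repr, fourierBasis_repr, fourierCoeff_congr_ae (coeFn_Mzbar f), hconj,
    fourierCoeff_fourier_mul, sub_neg_eq_add]

lemma Mz_Mzbar (f : L2) : Mz (Mzbar f) = f :=
  fourierBasis.repr.injective <| lp.ext <| funext fun n => by
    rw [repr_Mz, repr_Mzbar, sub_add_cancel]

lemma repr_conjL2 (f : L2) (n : ℤ) :
    fourierBasis.repr (conjL2 f) n = (starRingEnd ℂ) (fourierBasis.repr f (-n)) := by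
  rw [fourierBasis_repr, fourierBasis_repr, fourierCoeff_congr_ae (coeFn_conjL2 f)]
  simp only [fourierCoeff, ← integral_conj, smul_eq_mul, map_mul, ← fourier_neg, neg_neg]

lemma oneL2_eq_fourierBasis_zero : oneL2 = fourierBasis 0 := by
  refine Lp.ext ?_
  filter_upwards [coeFn_oneL2, coeFn_fourierLp 2 0] with x h1 h2
  rw [h1, coe_fourierBasis, h2, fourier_zero]

lemma repr_oneL2 (n : ℤ) : fourierBasis.repr oneL2 n = if n = 0 then 1 else 0 := by
  rw [oneL2_eq_fourierBasis_zero, fourierBasis.repr_self, lp.single_apply, Pi.single_apply]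

lemma Hm_le_orthogonal_H2 : Hm ≤ H2ᗮ := fun _ hf _ hg =>
  fourierBasis.inner_eq_zero_of_repr fun n =>
    (lt_or_ge n 0).imp (hg n) (hf n)

lemma Mzbar_mem_Hm {f : L2} (hf : f ∈ Hm) : Mzbar f ∈ Hm := fun n hn => by
  rw [repr_Mzbar]
  exact hf (n + 1) (by omega)

lemma Mz_sub_mem_Hm {f : L2} (hf : f ∈ Hm) :
    Mz f - fourierBasis.repr f (-1) • oneL2 ∈ Hm := fun n hn => by
  simp only [map_sub, map_smul, lp.coeFn_sub, lp.coeFn_smul, Pi.sub_apply, Pi.smul_apply,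
    smul_eq_mul, repr_Mz, repr_oneL2]
  rcases hn.eq_or_lt with rfl | hpos
  · simp
  · simp [hf (n - 1) (by omega), hpos.ne']

namespace InnerData

variable (U : InnerData)

lemma Hm_le_KP : Hm ≤ U.KP :=
  Hm_le_orthogonal_H2.trans (Submodule.orthogonal_le inf_le_left)

lemma coeFn_toL2 : (U.toL2 : AddCircle T → ℂ) =ᵐ[μ] U.u :=
  MemLp.coeFn_toLp _

lemma coeFn_M (f : L2) :
    (U.M f : AddCircle T → ℂ) =ᵐ[μ] fun x => U.u x * (f : AddCircle T → ℂ) x :=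
  coeFn_mulCLM _ _ _ f

lemma repr_toL2 (n : ℤ) : fourierBasis.repr U.toL2 n = fourierCoeff U.u n := by
  rw [fourierBasis_repr, fourierCoeff_congr_ae U.coeFn_toL2]

lemma fourierCoeff_eq_zero_of_nonpos (h0 : U.a0 = 0) {n : ℤ} (hn : n ≤ 0) :
    fourierCoeff U.u n = 0 := by
  rcases hn.eq_or_lt with rfl | hneg
  · exact h0
  · exact U.anal n hneg

lemma conjL2_toL2_mem_Hm (h0 : U.a0 = 0) : conjL2 U.toL2 ∈ Hm := fun n hn => by
  rw [repr_conjL2, repr_toL2, U.fourierCoeff_eq_zero_of_nonpos h0 (by omega), map_zero]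

lemma inner_oneL2_M (f : L2) : ⟪oneL2, U.M f⟫_ℂ = ⟪conjL2 U.toL2, f⟫_ℂ := by
  rw [L2.inner_def, L2.inner_def]
  refine integral_congr_ae ?_
  filter_upwards [U.coeFn_M f, coeFn_oneL2, coeFn_conjL2 U.toL2, U.coeFn_toL2]
    with x hM h1 hc hu
  rw [hM, h1, hc, hu]
  simp [mul_comm]

-- `1 ⊥ uH²` since `⟨1, uh⟩ = ⟨conj u, h⟩` and `conj u ∈ conj(H²₀)` once `u(0) = 0`.
lemma oneL2_mem_Ku (h0 : U.a0 = 0) : oneL2 ∈ U.Ku := by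
  refine ⟨fun n hn => by rw [repr_oneL2, if_neg hn.ne],
    (Submodule.mem_orthogonal' _ _).mpr ?_⟩
  rintro _ ⟨f, hf, rfl⟩
  exact (U.inner_oneL2_M f).trans
    (inner_eq_zero_symm.mp (Hm_le_orthogonal_H2 (U.conjL2_toL2_mem_Hm h0) f hf))

lemma coe_Du (f : U.KP) : (U.Du f : L2) = U.KP.starProjection (Mz f) := rfl

lemma Du_of_mem_Hm (h0 : U.a0 = 0) {f : U.KP} (hf : (f : L2) ∈ Hm) :
    (U.Du f : L2) = Mz f - fourierBasis.repr (f : L2) (-1) • oneL2 :=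
  Submodule.eq_starProjection_of_mem_orthogonal' (U.Hm_le_KP (Mz_sub_mem_Hm hf))
    (U.Ku.le_orthogonal_orthogonal (U.Ku.smul_mem _ (U.oneL2_mem_Ku h0)))
    (sub_add_cancel _ _).symm

lemma Du_Mzbar {f : L2} (hf : f ∈ Hm) :
    (U.Du ⟨Mzbar f, U.Hm_le_KP (Mzbar_mem_Hm hf)⟩ : L2) = f := by
  rw [coe_Du, Mz_Mzbar]
  exact Submodule.starProjection_eq_self_iff.mpr (U.Hm_le_KP hf)

end InnerData

/-- If `u(0) = 0` then `D_u` maps `conj(H²₀)` onto `conj(H²₀)`. -/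
theorem Du_maps_Hm_onto_Hm (U : InnerData) (h0 : U.a0 = 0) :
    (fun f : U.KP => (U.Du f : L2)) '' {f : U.KP | (f : L2) ∈ Hm} = (Hm : Set L2) := by
  ext g
  constructor
  · rintro ⟨f, hf, rfl⟩
    change (U.Du f : L2) ∈ Hm
    rw [U.Du_of_mem_Hm h0 hf]
    exact Mz_sub_mem_Hm hf
  · intro hg
    exact ⟨_, Mzbar_mem_Hm hg, U.Du_Mzbar hg⟩

end Paper
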